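/- Suppose 0 < β < β_K := (1−η)^{α−1}/Γ(α) and fix b ∈ [η,1) with βΓ(α) > (b−η)^{α−1}. Then with Φ(s) = max{(βΓ(α)+η^{α−1})/Γ(α), ((1−η)^{α−1}−βΓ(α))/Γ(α)} and c_{3,K} = min{(βΓ(α)−(b−η)^{α−1})/(βΓ(α)+η^{α−1}), (βΓ(α)−(b−η)^{α−1})/((1−η)^{α−1}−βΓ(α))} ∈ (0,1], one has |K(t,s)| ≤ Φ(s) for all t,s ∈ [0,1] and K(t,s) ≥ c_{3,K}·Φ(s) for all t ∈ [0,b] and s ∈ [0,1]. -/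

import Mathlib

open Set MeasureTheory

/-- The Green's function `K(t,s) = β + ((η−s)^{α−1}/Γ(α))·χ_{[0,η]}(s) −
((t−s)^{α−1}/Γ(α))·χ_{[0,t]}(s)`. -/
noncomputable def Kker (α η β t s : ℝ) : ℝ :=
  β + (Set.Icc (0:ℝ) η).indicator (fun x => (η - x) ^ (α - 1) / Real.Gamma α) s
    - (Set.Icc (0:ℝ) t).indicator (fun x => (t - x) ^ (α - 1) / Real.Gamma α) s

/-- The function `γ(t) = β/Γ(3−α) + η − t`. -/
noncomputable def gam (α η β t : ℝ) : ℝ := β / Real.Gamma (3 - α) + η - t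

/-!
For `s ≥ 0` the kernel is `K(t,s) = β + ((η−s)⁺^{α−1} − (t−s)⁺^{α−1})/Γ(α)`. Dropping the
subtracted term bounds it above by `β + η^{α−1}/Γ(α)`. Since `x ↦ x⁺^{α−1}` is subadditive for
`α − 1 ∈ (0,1]`, the difference of the two powers is at least `−(t−η)⁺^{α−1}`, which bounds
`K` below by `β − (u−η)^{α−1}/Γ(α)` whenever `t, η ≤ u`. With `u = 1` and the upper bound this
gives `|K(t,s)| ≤ Φ(s)`, and with `u = b` the lower bound is exactly `c_{3,K}·Φ(s)`.
-/

lemma posPart_le_posPart_sub_add_posPart {α : Type*} [AddCommGroup α] [LinearOrder α]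
    [IsOrderedAddMonoid α] (x y : α) : x⁺ ≤ (x - y)⁺ + y⁺ := by
  rw [posPart_def]
  refine sup_le ?_ (add_nonneg (posPart_nonneg _) (posPart_nonneg _))
  calc x = (x - y) + y := (sub_add_cancel x y).symm
    _ ≤ (x - y)⁺ + y⁺ := add_le_add (le_posPart _) (le_posPart _)

lemma posPart_rpow_sub_posPart_rpow_le {p : ℝ} (hp0 : 0 ≤ p) (hp1 : p ≤ 1) (x y : ℝ) :
    x⁺ ^ p - y⁺ ^ p ≤ (x - y)⁺ ^ p := by
  rcases le_total x⁺ y⁺ with hxy | hyx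
  · have : x⁺ ^ p ≤ y⁺ ^ p := Real.rpow_le_rpow (posPart_nonneg x) hxy hp0
    linarith [Real.rpow_nonneg (posPart_nonneg (x - y)) p]
  · have hdiff : 0 ≤ x⁺ - y⁺ := sub_nonneg.2 hyx
    calc x⁺ ^ p - y⁺ ^ p = ((x⁺ - y⁺) + y⁺) ^ p - y⁺ ^ p := by rw [sub_add_cancel]
      _ ≤ (x⁺ - y⁺) ^ p := by
        linarith [Real.rpow_add_le_add_rpow hdiff (posPart_nonneg y) hp0 hp1]
      _ ≤ (x - y)⁺ ^ p := Real.rpow_le_rpow hdiff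
        (sub_le_iff_le_add.2 (posPart_le_posPart_sub_add_posPart x y)) hp0

lemma indicator_Icc_sub_rpow_div {p s : ℝ} (hp : 0 < p) (hs : 0 ≤ s) (a c : ℝ) :
    (Icc 0 a).indicator (fun x => (a - x) ^ p / c) s = (a - s)⁺ ^ p / c := by
  by_cases hsa : s ≤ a
  · rw [indicator_of_mem (mem_Icc.2 ⟨hs, hsa⟩), posPart_eq_self.2 (sub_nonneg.2 hsa)]
  · rw [indicator_of_notMem fun h => hsa h.2,
      posPart_eq_zero.2 (sub_nonpos.2 (not_le.1 hsa).le), Real.zero_rpow hp.ne', zero_div]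

section Kker

variable {α η β t s : ℝ}

lemma Kker_eq (hα : 1 < α) (hs : 0 ≤ s) :
    Kker α η β t s =
      β + (η - s)⁺ ^ (α - 1) / Real.Gamma α - (t - s)⁺ ^ (α - 1) / Real.Gamma α := by
  rw [Kker, indicator_Icc_sub_rpow_div (by linarith) hs,
    indicator_Icc_sub_rpow_div (by linarith) hs]

lemma Kker_le (hα : 1 < α) (hη : 0 ≤ η) (hs : 0 ≤ s) :
    Kker α η β t s ≤ β + η ^ (α - 1) / Real.Gamma α := by
  have hG : 0 < Real.Gamma α := Real.Gamma_pos_of_pos (by linarith)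
  have hηs : (η - s)⁺ ^ (α - 1) ≤ η ^ (α - 1) :=
    Real.rpow_le_rpow (posPart_nonneg _) (sup_le (by linarith) hη) (by linarith)
  have hts : 0 ≤ (t - s)⁺ ^ (α - 1) / Real.Gamma α :=
    div_nonneg (Real.rpow_nonneg (posPart_nonneg _) _) hG.le
  rw [Kker_eq hα hs]
  linarith [div_le_div_of_nonneg_right hηs hG.le]

lemma sub_le_Kker {u : ℝ} (hα1 : 1 < α) (hα2 : α ≤ 2) (htu : t ≤ u) (hηu : η ≤ u)
    (hs : 0 ≤ s) : β - (u - η) ^ (α - 1) / Real.Gamma α ≤ Kker α η β t s := by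
  have hG : 0 < Real.Gamma α := Real.Gamma_pos_of_pos (by linarith)
  have hdiff : (t - s)⁺ ^ (α - 1) - (η - s)⁺ ^ (α - 1) ≤ (u - η) ^ (α - 1) :=
    calc (t - s)⁺ ^ (α - 1) - (η - s)⁺ ^ (α - 1) ≤ ((t - s) - (η - s))⁺ ^ (α - 1) :=
          posPart_rpow_sub_posPart_rpow_le (by linarith) (by linarith) _ _
      _ ≤ (u - η) ^ (α - 1) := Real.rpow_le_rpow (posPart_nonneg _)
          (sup_le (by linarith) (by linarith)) (by linarith)
  rw [Kker_eq hα1 hs]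
  linarith [div_le_div_of_nonneg_right hdiff hG.le, sub_div ((t - s)⁺ ^ (α - 1))
    ((η - s)⁺ ^ (α - 1)) (Real.Gamma α)]

end Kker

lemma min_div_mul_max_div {N A B G : ℝ} (hN : 0 ≤ N) (hA : 0 < A) (hB : 0 < B) :
    min (N / A) (N / B) * (max A B / G) = N / G := by
  rcases le_total A B with hAB | hBA
  · rw [min_eq_right (div_le_div_of_nonneg_left hN hA hAB), max_eq_right hAB]
    field_simp
  · rw [min_eq_left (div_le_div_of_nonneg_left hN hB hBA), max_eq_left hBA]
    field_simp

theorem stmt_8_general (α η β : ℝ) (hα1 : 1 < α) (hα2 : α ≤ 2) (hη0 : 0 < η) (hη1 : η < 1)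
    (hβK : β < (1 - η) ^ (α - 1) / Real.Gamma α)
    (b : ℝ) (hbl : η ≤ b) (hbβ : (b - η) ^ (α - 1) < β * Real.Gamma α)
    (Φ : ℝ → ℝ)
    (hΦ : ∀ s, Φ s = max ((β * Real.Gamma α + η ^ (α - 1)) / Real.Gamma α)
      (((1 - η) ^ (α - 1) - β * Real.Gamma α) / Real.Gamma α))
    (c : ℝ)
    (hc : c = min
      ((β * Real.Gamma α - (b - η) ^ (α - 1)) / (β * Real.Gamma α + η ^ (α - 1)))
      ((β * Real.Gamma α - (b - η) ^ (α - 1)) / ((1 - η) ^ (α - 1) - β * Real.Gamma α))) :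
    c ∈ Set.Ioc (0:ℝ) 1 ∧
    (∀ t ∈ Set.Icc (0:ℝ) 1, ∀ s ∈ Set.Icc (0:ℝ) 1, |Kker α η β t s| ≤ Φ s) ∧
    (∀ t ∈ Set.Icc (0:ℝ) b, ∀ s ∈ Set.Icc (0:ℝ) 1, c * Φ s ≤ Kker α η β t s) := by
  have hG : 0 < Real.Gamma α := Real.Gamma_pos_of_pos (by linarith)
  set G := Real.Gamma α
  set A := β * G + η ^ (α - 1) with hA_def
  set B := (1 - η) ^ (α - 1) - β * G with hB_def
  set N := β * G - (b - η) ^ (α - 1) with hN_def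
  have hN : 0 < N := sub_pos.2 hbβ
  have hNA : N < A := by
    have := Real.rpow_pos_of_pos hη0 (α - 1)
    have := Real.rpow_nonneg (sub_nonneg.2 hbl) (α - 1)
    linarith
  have hB : 0 < B := sub_pos.2 ((lt_div_iff₀ hG).1 hβK)
  have hΦ' (s : ℝ) : Φ s = max A B / G := by rw [hΦ s, max_div_div_right hG.le]
  have hA_div : A / G = β + η ^ (α - 1) / G := by
    rw [hA_def, add_div, mul_div_cancel_right₀ _ hG.ne']
  have hB_div : B / G = (1 - η) ^ (α - 1) / G - β := by
    rw [hB_def, sub_div, mul_div_cancel_right₀ _ hG.ne']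
  have hN_div : N / G = β - (b - η) ^ (α - 1) / G := by
    rw [hN_def, sub_div, mul_div_cancel_right₀ _ hG.ne']
  refine ⟨⟨?_, ?_⟩, ?_, ?_⟩
  · exact hc ▸ lt_min (div_pos hN (hN.trans hNA)) (div_pos hN hB)
  · exact hc ▸ (min_le_left _ _).trans ((div_le_one (hN.trans hNA)).2 hNA.le)
  · rintro t ⟨-, ht1⟩ s ⟨hs0, -⟩
    have hK_le : Kker α η β t s ≤ A / G := hA_div ▸ Kker_le hα1 hη0.le hs0
    have hK_ge : -(B / G) ≤ Kker α η β t s := by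
      rw [hB_div, neg_sub]; exact sub_le_Kker hα1 hα2 ht1 hη1.le hs0
    rw [hΦ', abs_le]
    constructor
    · exact (neg_le_neg (div_le_div_of_nonneg_right (le_max_right A B) hG.le)).trans hK_ge
    · exact hK_le.trans (div_le_div_of_nonneg_right (le_max_left A B) hG.le)
  · rintro t ⟨-, htb⟩ s ⟨hs0, -⟩
    have hcΦ : c * Φ s = β - (b - η) ^ (α - 1) / G := by
      rw [hc, hΦ', min_div_mul_max_div hN.le (hN.trans hNA) hB, hN_div]
    exact hcΦ ▸ sub_le_Kker hα1 hα2 htb hbl hs0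

/-- if `0 < β < β_K` and `b ∈ [η,1)` with `βΓ(α) > (b−η)^{α−1}`, then with
`Φ(s) = max{(βΓ(α)+η^{α−1})/Γ(α), ((1−η)^{α−1}−βΓ(α))/Γ(α)}` and
`c_{3,K} = min{(βΓ(α)−(b−η)^{α−1})/(βΓ(α)+η^{α−1}),
(βΓ(α)−(b−η)^{α−1})/((1−η)^{α−1}−βΓ(α))} ∈ (0,1]`, one has `|K(t,s)| ≤ Φ(s)` for all
`t, s ∈ [0,1]` and `K(t,s) ≥ c_{3,K}·Φ(s)` for all `t ∈ [0,b]`, `s ∈ [0,1]`. -/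
theorem stmt_8 (α η β : ℝ) (hα1 : 1 < α) (hα2 : α ≤ 2) (hη0 : 0 < η) (hη1 : η < 1)
    (hβ : 0 < β) (hβK : β < (1 - η) ^ (α - 1) / Real.Gamma α)
    (b : ℝ) (hbl : η ≤ b) (hbu : b < 1) (hbβ : (b - η) ^ (α - 1) < β * Real.Gamma α)
    (Φ : ℝ → ℝ)
    (hΦ : ∀ s, Φ s = max ((β * Real.Gamma α + η ^ (α - 1)) / Real.Gamma α)
      (((1 - η) ^ (α - 1) - β * Real.Gamma α) / Real.Gamma α))
    (c : ℝ)
    (hc : c = min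
      ((β * Real.Gamma α - (b - η) ^ (α - 1)) / (β * Real.Gamma α + η ^ (α - 1)))
      ((β * Real.Gamma α - (b - η) ^ (α - 1)) / ((1 - η) ^ (α - 1) - β * Real.Gamma α))) :
    c ∈ Set.Ioc (0:ℝ) 1 ∧
    (∀ t ∈ Set.Icc (0:ℝ) 1, ∀ s ∈ Set.Icc (0:ℝ) 1, |Kker α η β t s| ≤ Φ s) ∧
    (∀ t ∈ Set.Icc (0:ℝ) b, ∀ s ∈ Set.Icc (0:ℝ) 1, c * Φ s ≤ Kker α η β t s) :=
  stmt_8_general α η β hα1 hα2 hη0 hη1 hβK b hbl hbβ Φ hΦ c hc
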